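/- arXiv:1409.8405 — 2 statements merged into one kernel-verified Lean document; each statement's English description precedes it below -/
import Mathlib

section
/- Let 𝔥 = 𝔥_{-l} ⊕ ⋯ ⊕ 𝔥_l be a |l|-graded semisimple Lie algebra with Killing form B, and θ a Cartan involution with θ(𝔥_i) = 𝔥_{-i}. Then the metric B_θ(X,Y) = -B(X, θ(Y)) is admissible: for every g in the connected subgroup Q with Lie algebra 𝔮 = 𝔥_0 ⊕ 𝔥_+, the B_θ-adjoint of Ad_g equals θ ∘ Ad_{g^{-1}} ∘ θ, and consequently conditions Ad_g^*([Z,W]) = [(Ad_g^-)^*(Z), Ad_g^*(W)] (Z ∈ 𝔥_-, W ∈ 𝔥) and (Ad_g^-)^*([Z,W]) = [(Ad_g^-)^*(Z),(Ad_g^-)^*(W)] (Z,W ∈ 𝔥_-) hold. -/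
/-!
`B` is `Ad_Q`-invariant, so the `B_θ`-adjoint of `Ad_g` is `θ ∘ Ad_{g⁻¹} ∘ θ`, and this map is a
Lie algebra automorphism because `θ` and `Ad_{g⁻¹}` are. The only point is to identify it on `𝔥_-`
with `(Ad_g^-)^*`. Since `Ad_{g⁻¹}` preserves the filtration `𝔥^i = ⨁_{j ≥ i} 𝔥_j` and `θ` swaps
`𝔥_-` with `𝔥^1`, it maps `𝔥_-` to itself. For `x, z ∈ 𝔥_-` the element `Ad_g x - Ad_g^- x` lies
in `𝔮 = 𝔥^0`, which is `B`-orthogonal to `𝔥^1 ∋ θ z`: for `u ∈ 𝔥^0`, `v ∈ 𝔥^1` the operator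
`ad u ∘ ad v` raises the filtration degree, hence is nilpotent and traceless. So both maps have
the same `B_θ`-pairings with `𝔥_-`, and they agree there because `B_θ` is positive definite.
-/

section GradedFiltration

variable {R M : Type*} [Semiring R] [AddCommMonoid M] [Module R M] {h : ℤ → Submodule R M}

theorem mem_iSup_ge_of_mem {i j : ℤ} (hij : i ≤ j) {x : M} (hx : x ∈ h j) :
    x ∈ ⨆ k ≥ i, h k :=
  Submodule.mem_iSup_of_mem j (Submodule.mem_iSup_of_mem hij hx)

theorem iSup_ge_antitone (h : ℤ → Submodule R M) : Antitone fun i : ℤ => ⨆ j ≥ i, h j :=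
  fun _ _ hii' => biSup_mono fun _ hj => le_trans hii' hj

theorem iSup_ge_eq_top {a : ℤ} (htop : iSup h = ⊤) (hbot : ∀ i < a, h i = ⊥) :
    ⨆ j ≥ a, h j = ⊤ := by
  refine top_unique (htop ▸ iSup_le fun i => ?_)
  by_cases hi : a ≤ i
  · exact fun x hx => mem_iSup_ge_of_mem hi hx
  · simp [hbot i (not_le.mp hi)]

theorem iSup_lt_zero_le_comap_iSup_ge_one {θ : M →ₗ[R] M}
    (hθ : ∀ i : ℤ, ∀ x ∈ h i, θ x ∈ h (-i)) :
    ⨆ i < (0 : ℤ), h i ≤ (⨆ j ≥ (1 : ℤ), h j).comap θ :=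
  iSup₂_le fun i hi x hx => mem_iSup_ge_of_mem (by omega) (hθ i x hx)

theorem iSup_ge_one_le_comap_iSup_lt_zero {θ : M →ₗ[R] M}
    (hθ : ∀ i : ℤ, ∀ x ∈ h i, θ x ∈ h (-i)) :
    ⨆ j ≥ (1 : ℤ), h j ≤ (⨆ i < (0 : ℤ), h i).comap θ :=
  iSup₂_le fun j hj x hx =>
    Submodule.mem_iSup_of_mem (-j) (Submodule.mem_iSup_of_mem (by omega) (hθ j x hx))

end GradedFiltration

theorem Module.End.pow_eq_zero_of_le_comap_succ {R M : Type*} [Semiring R] [AddCommMonoid M]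
    [Module R M] {F : ℤ → Submodule R M} {f : Module.End R M}
    (hf : ∀ k, F k ≤ (F (k + 1)).comap f) {a : ℤ} (htop : F a = ⊤) {n : ℕ}
    (hbot : F (a + n) = ⊥) : f ^ n = 0 := by
  have hpow : ∀ m : ℕ, F a ≤ (F (a + m)).comap (f ^ m) := by
    intro m
    induction m with
    | zero => intro x hx; simpa using hx
    | succ m ih =>
      intro x hx
      rw [Submodule.mem_comap, pow_succ', Module.End.mul_apply, Nat.cast_succ, ← add_assoc]
      exact hf _ (ih hx)
  ext x
  simpa [hbot] using hpow n (htop ▸ Submodule.mem_top : x ∈ F a)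

section GradedLieAlgebra

variable {R L : Type*} [CommRing R] [LieRing L] [LieAlgebra R L] {h : ℤ → Submodule R L}

theorem lie_mem_iSup_ge (hbkt : ∀ i j : ℤ, ∀ x ∈ h i, ∀ y ∈ h j, ⁅x, y⁆ ∈ h (i + j))
    {a b : ℤ} {x y : L} (hx : x ∈ ⨆ i ≥ a, h i) (hy : y ∈ ⨆ j ≥ b, h j) :
    ⁅x, y⁆ ∈ ⨆ k ≥ a + b, h k := by
  have hle : Submodule.map₂ (LieAlgebra.ad R L : L →ₗ[R] Module.End R L)
      (⨆ i ≥ a, h i) (⨆ j ≥ b, h j) ≤ ⨆ k ≥ a + b, h k := by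
    simp only [Submodule.map₂_iSup_left, Submodule.map₂_iSup_right, iSup_le_iff,
      Submodule.map₂_le]
    intro j hj i hi x hx y hy
    exact mem_iSup_ge_of_mem (by omega) (hbkt i j x hx y hy)
  exact hle (Submodule.apply_mem_map₂ _ hx hy)

theorem killingForm_eq_zero_of_mem_iSup_ge [IsReduced R] [Module.Free R L] [Module.Finite R L]
    {l : ℕ} (htop : iSup h = ⊤) (hbound : ∀ i : ℤ, (i < -(l : ℤ) ∨ (l : ℤ) < i) → h i = ⊥)
    (hbkt : ∀ i j : ℤ, ∀ x ∈ h i, ∀ y ∈ h j, ⁅x, y⁆ ∈ h (i + j))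
    {a b : ℤ} (hab : 0 < a + b) {x y : L} (hx : x ∈ ⨆ i ≥ a, h i) (hy : y ∈ ⨆ j ≥ b, h j) :
    killingForm R L x y = 0 := by
  have hraise : ∀ k, (⨆ j ≥ k, h j) ≤
      (⨆ j ≥ k + 1, h j).comap (LieAlgebra.ad R L x ∘ₗ LieAlgebra.ad R L y) := fun k z hz =>
    iSup_ge_antitone h (by omega) (lie_mem_iSup_ge hbkt hx (lie_mem_iSup_ge hbkt hy hz))
  have hnil : (LieAlgebra.ad R L x ∘ₗ LieAlgebra.ad R L y) ^ (2 * l + 1) = 0 :=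
    Module.End.pow_eq_zero_of_le_comap_succ hraise
      (iSup_ge_eq_top htop fun i hi => hbound i (.inl hi))
      (iSup₂_eq_bot.2 fun j hj => hbound j (.inr (by omega)))
  rw [killingForm_apply_apply]
  exact (LinearMap.isNilpotent_trace_of_isNilpotent ⟨_, hnil⟩).eq_zero

end GradedLieAlgebra

theorem eq_of_forall_mem_apply_eq {R M : Type*} [CommRing R] [Preorder R] [AddCommGroup M]
    [Module R M] {B : M →ₗ[R] M →ₗ[R] R} {θ : M →ₗ[R] M} (hpos : ∀ x, x ≠ 0 → 0 < -B x (θ x))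
    {N : Submodule R M} {u v : M} (hu : u ∈ N) (hv : v ∈ N)
    (huv : ∀ x ∈ N, B x (θ u) = B x (θ v)) : u = v := by
  by_contra hne
  have hdeg : B (u - v) (θ (u - v)) = 0 := by
    rw [map_sub θ, map_sub (B (u - v)), huv _ (sub_mem hu hv), sub_self]
  exact (hpos _ (sub_ne_zero.mpr hne)).ne' (by rw [hdeg, neg_zero])

section GroupAction

variable {Q R M : Type*} [Group Q] [CommSemiring R] [AddCommMonoid M] [Module R M]
  {ρ : Q → M ≃ₗ[R] M}

theorem apply_apply_inv_of_map_mul (hρ : ∀ (g₁ g₂ : Q) (x : M), ρ (g₁ * g₂) x = ρ g₁ (ρ g₂ x))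
    (g : Q) (x : M) : ρ g (ρ g⁻¹ x) = x := by
  have hone : ∀ y, ρ 1 y = y := fun y =>
    ((ρ 1).injective (by rw [← hρ, one_mul])).symm
  rw [← hρ, mul_inv_cancel, hone]

theorem apply_left_eq_apply_inv_right {B : M →ₗ[R] M →ₗ[R] R}
    (hρ : ∀ (g₁ g₂ : Q) (x : M), ρ (g₁ * g₂) x = ρ g₁ (ρ g₂ x))
    (hB : ∀ (g : Q) (x y : M), B (ρ g x) (ρ g y) = B x y) (g : Q) (x y : M) :
    B (ρ g x) y = B x (ρ g⁻¹ y) := by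
  conv_lhs => rw [← apply_apply_inv_of_map_mul hρ g y]
  exact hB g x _

end GroupAction

theorem semisimple_standard_metric_admissible_general
    {L Q : Type*} [LieRing L] [LieAlgebra ℝ L] [FiniteDimensional ℝ L]
    [Group Q]
    (l : ℕ) (h : ℤ → Submodule ℝ L)
    (hint : DirectSum.IsInternal h)
    (hbound : ∀ i : ℤ, (i < -(l : ℤ) ∨ (l : ℤ) < i) → h i = ⊥)
    (hbkt : ∀ i j : ℤ, ∀ x ∈ h i, ∀ y ∈ h j, ⁅x, y⁆ ∈ h (i + j))
    -- the Cartan involution `θ`, compatible with the gradation: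
    (θ : L ≃ₗ[ℝ] L)
    (hθLie : ∀ x y : L, θ ⁅x, y⁆ = ⁅θ x, θ y⁆)
    (hθinvol : ∀ x : L, θ (θ x) = x)
    (hθgr : ∀ i : ℤ, ∀ x ∈ h i, θ x ∈ h (-i))
    -- `B_θ = -B(·, θ·)` is positive definite (Cartan involution property):
    (hpos : ∀ x : L, x ≠ 0 → 0 < -(killingForm ℝ L x (θ x)))
    -- `𝔥_-` and bracket-closedness:
    (Hneg : Submodule ℝ L) (hHneg : Hneg = ⨆ i < (0 : ℤ), h i)
    (hcl : ∀ x y : Hneg, ⁅(x : L), (y : L)⁆ ∈ Hneg)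
    -- `Q` acts by filtration-preserving Lie algebra automorphisms preserving `B`:
    (AdL : Q → L ≃ₗ[ℝ] L)
    (hAdhom : ∀ (g₁ g₂ : Q) (x : L), AdL (g₁ * g₂) x = AdL g₁ (AdL g₂ x))
    (hAdLie : ∀ (g : Q) (x y : L), AdL g ⁅x, y⁆ = ⁅AdL g x, AdL g y⁆)
    (hAdFil : ∀ (g : Q) (i : ℤ), ∀ x ∈ (⨆ j ≥ i, h j), AdL g x ∈ (⨆ j ≥ i, h j))
    (hBinv : ∀ (g : Q) (x y : L),
      killingForm ℝ L (AdL g x) (AdL g y) = killingForm ℝ L x y)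
    -- the induced action `Ad^-` of `Q` on `𝔥_- ≅ 𝔥/𝔮` and its `B_θ`-adjoint:
    (Adm : Q → (Hneg →ₗ[ℝ] Hneg))
    (hAdm : ∀ (g : Q) (x : Hneg), (AdL g x : L) - (Adm g x : L) ∈ (⨆ j ≥ (0 : ℤ), h j))
    (AdmStar : Q → (Hneg →ₗ[ℝ] Hneg))
    (hAdmStar : ∀ (g : Q) (x y : Hneg),
      -(killingForm ℝ L (Adm g x : L) (θ (y : L))) =
        -(killingForm ℝ L (x : L) (θ (AdmStar g y : L)))) :
    -- (a) the `B_θ`-adjoint of `Ad_g` is `θ ∘ Ad_{g⁻¹} ∘ θ`: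
    (∀ (g : Q) (x y : L),
        -(killingForm ℝ L (AdL g x) (θ y)) =
          -(killingForm ℝ L x (θ (θ (AdL g⁻¹ (θ y)))))) ∧
      -- (b) condition (1): `Ad_g^*⁅Z,W⁆ = ⁅(Ad_g^-)^* Z, Ad_g^* W⁆`:
      (∀ (g : Q) (Z : Hneg) (W : L),
        θ (AdL g⁻¹ (θ ⁅(Z : L), W⁆)) = ⁅(AdmStar g Z : L), θ (AdL g⁻¹ (θ W))⁆) ∧
      -- (c) condition (2): `(Ad_g^-)^*⁅Z,W⁆ = ⁅(Ad_g^-)^* Z, (Ad_g^-)^* W⁆`: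
      (∀ (g : Q) (Z W : Hneg),
        (AdmStar g ⟨⁅(Z : L), (W : L)⁆, hcl Z W⟩ : L) =
          ⁅(AdmStar g Z : L), (AdmStar g W : L)⁆) := by
  have hadj := apply_left_eq_apply_inv_right hAdhom hBinv
  have hθneg : Hneg ≤ (⨆ j ≥ (1 : ℤ), h j).comap θ.toLinearMap :=
    hHneg ▸ iSup_lt_zero_le_comap_iSup_ge_one hθgr
  have hθpos : ⨆ j ≥ (1 : ℤ), h j ≤ Hneg.comap θ.toLinearMap :=
    hHneg ▸ iSup_ge_one_le_comap_iSup_lt_zero hθgr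
  have hkey : ∀ (g : Q) (z : Hneg), θ (AdL g⁻¹ (θ z)) = AdmStar g z := by
    intro g z
    refine eq_of_forall_mem_apply_eq (B := killingForm ℝ L) (θ := θ.toLinearMap) (N := Hneg) hpos
      (hθpos (hAdFil g⁻¹ 1 _ (hθneg z.2))) (AdmStar g z).2 fun x hx => ?_
    have horth : killingForm ℝ L (AdL g x - Adm g ⟨x, hx⟩) (θ z) = 0 :=
      killingForm_eq_zero_of_mem_iSup_ge hint.submodule_iSup_eq_top hbound hbkt
        (a := 0) (b := 1) one_pos (hAdm g ⟨x, hx⟩) (hθneg z.2)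
    calc killingForm ℝ L x (θ (θ (AdL g⁻¹ (θ z)))) = killingForm ℝ L (AdL g x) (θ z) := by
          rw [hθinvol, hadj]
      _ = killingForm ℝ L (Adm g ⟨x, hx⟩) (θ z) := by
          rwa [LinearMap.map_sub₂, sub_eq_zero] at horth
      _ = killingForm ℝ L x (θ (AdmStar g z)) := neg_inj.mp (hAdmStar g ⟨x, hx⟩ z)
  have hTlie : ∀ (g : Q) (x y : L),
      θ (AdL g⁻¹ (θ ⁅x, y⁆)) = ⁅θ (AdL g⁻¹ (θ x)), θ (AdL g⁻¹ (θ y))⁆ := fun g x y => by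
    rw [hθLie, hAdLie, hθLie]
  refine ⟨fun g x y => by rw [hθinvol, hadj], fun g Z W => by rw [hTlie, hkey], fun g Z W => ?_⟩
  rw [← hkey, ← hkey, ← hkey, ← hTlie]

theorem semisimple_standard_metric_admissible
    {L Q : Type*} [LieRing L] [LieAlgebra ℝ L] [FiniteDimensional ℝ L]
    [LieAlgebra.IsSemisimple ℝ L] [Group Q]
    (l : ℕ) (h : ℤ → Submodule ℝ L)
    (hint : DirectSum.IsInternal h)
    (hbound : ∀ i : ℤ, (i < -(l : ℤ) ∨ (l : ℤ) < i) → h i = ⊥)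
    (hbkt : ∀ i j : ℤ, ∀ x ∈ h i, ∀ y ∈ h j, ⁅x, y⁆ ∈ h (i + j))
    -- the Cartan involution `θ`, compatible with the gradation:
    (θ : L ≃ₗ[ℝ] L)
    (hθLie : ∀ x y : L, θ ⁅x, y⁆ = ⁅θ x, θ y⁆)
    (hθinvol : ∀ x : L, θ (θ x) = x)
    (hθgr : ∀ i : ℤ, ∀ x ∈ h i, θ x ∈ h (-i))
    -- `B_θ = -B(·, θ·)` is positive definite (Cartan involution property):
    (hpos : ∀ x : L, x ≠ 0 → 0 < -(killingForm ℝ L x (θ x)))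
    -- `𝔥_-` and bracket-closedness:
    (Hneg : Submodule ℝ L) (hHneg : Hneg = ⨆ i < (0 : ℤ), h i)
    (hcl : ∀ x y : Hneg, ⁅(x : L), (y : L)⁆ ∈ Hneg)
    -- `Q` acts by filtration-preserving Lie algebra automorphisms preserving `B`:
    (AdL : Q → L ≃ₗ[ℝ] L)
    (hAdhom : ∀ (g₁ g₂ : Q) (x : L), AdL (g₁ * g₂) x = AdL g₁ (AdL g₂ x))
    (hAdLie : ∀ (g : Q) (x y : L), AdL g ⁅x, y⁆ = ⁅AdL g x, AdL g y⁆)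
    (hAdFil : ∀ (g : Q) (i : ℤ), ∀ x ∈ (⨆ j ≥ i, h j), AdL g x ∈ (⨆ j ≥ i, h j))
    (hBinv : ∀ (g : Q) (x y : L),
      killingForm ℝ L (AdL g x) (AdL g y) = killingForm ℝ L x y)
    -- the induced action `Ad^-` of `Q` on `𝔥_- ≅ 𝔥/𝔮` and its `B_θ`-adjoint:
    (Adm : Q → (Hneg →ₗ[ℝ] Hneg))
    (hAdm : ∀ (g : Q) (x : Hneg), (AdL g x : L) - (Adm g x : L) ∈ (⨆ j ≥ (0 : ℤ), h j))
    (AdmStar : Q → (Hneg →ₗ[ℝ] Hneg))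
    (hAdmStar : ∀ (g : Q) (x y : Hneg),
      -(killingForm ℝ L (Adm g x : L) (θ (y : L))) =
        -(killingForm ℝ L (x : L) (θ (AdmStar g y : L)))) :
    -- (a) the `B_θ`-adjoint of `Ad_g` is `θ ∘ Ad_{g⁻¹} ∘ θ`:
    (∀ (g : Q) (x y : L),
        -(killingForm ℝ L (AdL g x) (θ y)) =
          -(killingForm ℝ L x (θ (θ (AdL g⁻¹ (θ y)))))) ∧
      -- (b) condition (1): `Ad_g^*⁅Z,W⁆ = ⁅(Ad_g^-)^* Z, Ad_g^* W⁆`: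
      (∀ (g : Q) (Z : Hneg) (W : L),
        θ (AdL g⁻¹ (θ ⁅(Z : L), W⁆)) = ⁅(AdmStar g Z : L), θ (AdL g⁻¹ (θ W))⁆) ∧
      -- (c) condition (2): `(Ad_g^-)^*⁅Z,W⁆ = ⁅(Ad_g^-)^* Z, (Ad_g^-)^* W⁆`:
      (∀ (g : Q) (Z W : Hneg),
        (AdmStar g ⟨⁅(Z : L), (W : L)⁆, hcl Z W⟩ : L) =
          ⁅(AdmStar g Z : L), (AdmStar g W : L)⁆) :=
  semisimple_standard_metric_admissible_general l h hint hbound hbkt θ hθLie hθinvol hθgr hpos Hneg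
    hHneg hcl AdL hAdhom hAdLie hAdFil hBinv Adm hAdm AdmStar hAdmStar
end

section
/- Let 𝔤 = 𝔤_{-k} ⊕ ⋯ ⊕ 𝔤_0 be a fundamental non-positively graded Lie algebra and 𝔤* its coadjoint 𝔤_--module. For l ≥ 1, let γ ∈ C^1_l(𝔤_-, 𝔤*) satisfy ∂_{𝔤*}(γ) = 0 (i.e. γ([X,Y]) = γ(X)∘ad_Y − γ(Y)∘ad_X for X,Y ∈ 𝔤_-) and γ|_{𝔤_{-1}} = ∂_{𝔤*}(β)|_{𝔤_{-1}} for some β ∈ (𝔤_{-l})*, where ∂_{𝔤*}(β)(X) = −β([X,·]). Then γ = ∂_{𝔤*}(β) on all of 𝔤_-. -/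
/-!
The set of `X ∈ 𝔤` on which the cochains `γ` and `∂β : X ↦ L_X β` agree is a linear subspace.
Because `X ↦ L_X` is a representation, `∂β` satisfies the same cocycle identity as `γ`, so this
subspace is also closed under brackets of elements of `𝔤_-`. It contains `𝔤_{-1}`, which
generates `𝔤_-`, so it contains all of `𝔤_-`.
-/

variable {G : Type*} [LieRing G] [LieAlgebra ℝ G]

/-- The coadjoint action `L_X(α) = -α ∘ ad_X` of `𝔤_-` on `𝔤^*`. -/
noncomputable def coadAct (x : G) (η : G →ₗ[ℝ] ℝ) : G →ₗ[ℝ] ℝ :=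
  -(η ∘ₗ (LieAlgebra.ad ℝ G x))

/-- The dual piece `(𝔤^*)_i = (𝔤_{-i})^*` inside `𝔤^*`. -/
noncomputable def dualPiece (gr : ℤ → Submodule ℝ G) (i : ℤ) :
    Submodule ℝ (G →ₗ[ℝ] ℝ) :=
  ⨅ j ∈ {j : ℤ | j ≠ -i}, Submodule.dualAnnihilator (gr j)

@[simp]
theorem coadAct_apply (x : G) (η : G →ₗ[ℝ] ℝ) (z : G) : coadAct x η z = -η ⁅x, z⁆ := by
  simp [coadAct]

theorem coadAct_lie (u v : G) (η : G →ₗ[ℝ] ℝ) :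
    coadAct ⁅u, v⁆ η = coadAct u (coadAct v η) - coadAct v (coadAct u η) := by
  ext z
  simp only [LinearMap.sub_apply, coadAct_apply, lie_lie, map_sub]
  ring

noncomputable def coadCoboundary (β : G →ₗ[ℝ] ℝ) : G →ₗ[ℝ] (G →ₗ[ℝ] ℝ) where
  toFun x := coadAct x β
  map_add' x y := by ext z; simp only [coadAct_apply, add_lie, map_add, LinearMap.add_apply, neg_add]
  map_smul' c x := by ext z; simp [smul_lie]

@[simp]
theorem coadCoboundary_apply (β : G →ₗ[ℝ] ℝ) (x : G) : coadCoboundary β x = coadAct x β :=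
  rfl

theorem lie_mem_eqLocus_coadCoboundary {N : Set G} {γ : G →ₗ[ℝ] (G →ₗ[ℝ] ℝ)}
    (hco : ∀ x ∈ N, ∀ y ∈ N, γ ⁅x, y⁆ = coadAct x (γ y) - coadAct y (γ x))
    {β : G →ₗ[ℝ] ℝ} {u v : G} (hu : u ∈ N) (hv : v ∈ N)
    (hγu : u ∈ LinearMap.eqLocus γ (coadCoboundary β))
    (hγv : v ∈ LinearMap.eqLocus γ (coadCoboundary β)) :
    ⁅u, v⁆ ∈ LinearMap.eqLocus γ (coadCoboundary β) := by
  rw [LinearMap.mem_eqLocus, coadCoboundary_apply] at hγu hγv ⊢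
  rw [hco u hu v hv, hγu, hγv, coadAct_lie]

theorem le_of_fundamental (gr : ℤ → Submodule ℝ G)
    (hfund : ∀ i : ℤ, i < -1 → ∀ x ∈ gr i,
      x ∈ Submodule.span ℝ {z : G | ∃ u ∈ gr (-1), ∃ v ∈ gr (i + 1), z = ⁅u, v⁆})
    (E : Submodule ℝ G) (hE : gr (-1) ≤ E)
    (hlie : ∀ i < 0, ∀ u ∈ gr (-1), ∀ v ∈ gr i, v ∈ E → ⁅u, v⁆ ∈ E) :
    ∀ i < 0, gr i ≤ E := by
  intro i hi
  induction i, Int.le_sub_one_of_lt hi using Int.leInductionDown with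
  | base => exact hE
  | pred n hn ih =>
    intro x hx
    have hspan := hfund (n - 1) (by lia) x hx
    rw [sub_add_cancel] at hspan
    refine Submodule.span_le.mpr ?_ hspan
    rintro _ ⟨u, hu, v, hv, rfl⟩
    exact hlie n (by lia) u hu v hv (ih (by lia) hv)

theorem cocycle_coboundary_determined_on_generators_general
    (gr : ℤ → Submodule ℝ G)
    -- fundamentality: for `i < -1`, `𝔤_i = [𝔤_{-1}, 𝔤_{i+1}]`:
    (hfund : ∀ i : ℤ, i < -1 → ∀ x ∈ gr i,
      x ∈ Submodule.span ℝ {z : G | ∃ u ∈ gr (-1), ∃ v ∈ gr (i + 1), z = ⁅u, v⁆})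
    (γ : G →ₗ[ℝ] (G →ₗ[ℝ] ℝ))
    -- `∂_{𝔤^*} γ = 0`, i.e. `γ([X,Y]) = γ(X)∘ad_Y − γ(Y)∘ad_X` on `𝔤_-`:
    (hco : ∀ x ∈ (⨆ i < (0 : ℤ), gr i), ∀ y ∈ (⨆ i < (0 : ℤ), gr i),
      γ ⁅x, y⁆ = coadAct x (γ y) - coadAct y (γ x))
    -- `β ∈ (𝔤_{-l})^*`, and `γ = ∂_{𝔤^*} β` on `𝔤_{-1}` (`∂_{𝔤^*}β(X) = −β([X,·]) = L_X β`):
    (β : G →ₗ[ℝ] ℝ)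
    (hrestr : ∀ x ∈ gr (-1), γ x = coadAct x β) :
    ∀ x ∈ (⨆ i < (0 : ℤ), gr i), γ x = coadAct x β := by
  have hneg : ∀ i < (0 : ℤ), gr i ≤ ⨆ i < (0 : ℤ), gr i := fun i hi => le_iSup₂_of_le i hi le_rfl
  have hgr : ∀ i < 0, gr i ≤ LinearMap.eqLocus γ (coadCoboundary β) :=
    le_of_fundamental gr hfund _ hrestr fun i hi u hu v hv hγv =>
      lie_mem_eqLocus_coadCoboundary hco (hneg (-1) (by norm_num) hu) (hneg i hi hv)
        (hrestr u hu) hγv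
  exact fun x hx => iSup₂_le hgr hx

theorem cocycle_coboundary_determined_on_generators
    (gr : ℤ → Submodule ℝ G)
    (hnonpos : ∀ i : ℤ, 0 < i → gr i = ⊥)
    (hbkt : ∀ i j : ℤ, ∀ x ∈ gr i, ∀ y ∈ gr j, ⁅x, y⁆ ∈ gr (i + j))
    (hint : DirectSum.IsInternal gr)
    -- fundamentality: for `i < -1`, `𝔤_i = [𝔤_{-1}, 𝔤_{i+1}]`:
    (hfund : ∀ i : ℤ, i < -1 → ∀ x ∈ gr i,
      x ∈ Submodule.span ℝ {z : G | ∃ u ∈ gr (-1), ∃ v ∈ gr (i + 1), z = ⁅u, v⁆})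
    (l : ℤ) (hl : 1 ≤ l)
    -- `γ` is a `1`-cochain of homogeneous degree `l` with values in `𝔤^*`:
    (γ : G →ₗ[ℝ] (G →ₗ[ℝ] ℝ))
    (hdeg : ∀ i : ℤ, ∀ x ∈ gr i, γ x ∈ dualPiece gr (i + l))
    -- `∂_{𝔤^*} γ = 0`, i.e. `γ([X,Y]) = γ(X)∘ad_Y − γ(Y)∘ad_X` on `𝔤_-`:
    (hco : ∀ x ∈ (⨆ i < (0 : ℤ), gr i), ∀ y ∈ (⨆ i < (0 : ℤ), gr i),
      γ ⁅x, y⁆ = coadAct x (γ y) - coadAct y (γ x))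
    -- `β ∈ (𝔤_{-l})^*`, and `γ = ∂_{𝔤^*} β` on `𝔤_{-1}` (`∂_{𝔤^*}β(X) = −β([X,·]) = L_X β`):
    (β : G →ₗ[ℝ] ℝ) (hβ : β ∈ dualPiece gr l)
    (hrestr : ∀ x ∈ gr (-1), γ x = coadAct x β) :
    ∀ x ∈ (⨆ i < (0 : ℤ), gr i), γ x = coadAct x β :=
  cocycle_coboundary_determined_on_generators_general gr hfund γ hco β hrestr
end
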